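/- Let Q be an integral commutative quantale and let E(Q) denote its set of idempotent elements. On the set Q × E(Q) define δ((x, e), (y, a)) := a ⊗ e ⊗ ((x ⧵ y) ⊓ (y ⧵ x)). Then δ is a Q-set structure on Q × E(Q): it is symmetric; δ(p, q) ⊗ δ(q, r) ≤ δ(p, r) for all p, q, r ∈ Q × E(Q); and δ(p, p) ⊗ δ(p, q) = δ(p, q), with δ((x, e), (x, e)) = e. -/

import Mathlib

/-! The symmetrised residuation `(x ⧵ y) ⊓ (y ⧵ x)` is transitive because residuals compose:
`(x ⧵ y) ⊗ (y ⧵ z) ≤ x ⧵ z`. Integrality lets the surplus idempotent factor `a` in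
`δ(p, q) ⊗ δ(q, r)` be dropped, and it gives `x ⧵ x = ⊤`, whence `δ((x, e), (x, e)) = e`. -/

/-- Residuation in a quantale: `a ⧵ b = sSup {c | a * c ≤ b}`. -/
def res {Q : Type*} [Mul Q] [CompleteLattice Q] (a b : Q) : Q := sSup {c | a * c ≤ b}

section
variable {Q : Type*} [CommSemigroup Q] [CompleteLattice Q] [IsQuantale Q]

theorem le_res_iff {a b c : Q} : c ≤ res a b ↔ a * c ≤ b :=
  Quantale.rightMulResiduation_le_iff_mul_le

theorem mul_res_le (a b : Q) : a * res a b ≤ b := le_res_iff.mp le_rfl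

theorem res_mul_res_le (x y z : Q) : res x y * res y z ≤ res x z := by
  rw [le_res_iff, ← mul_assoc]
  calc x * res x y * res y z ≤ y * res y z := by gcongr; exact mul_res_le x y
    _ ≤ z := mul_res_le y z

theorem res_inf_res_mul_le (x y z : Q) :
    (res x y ⊓ res y x) * (res y z ⊓ res z y) ≤ res x z ⊓ res z x := by
  refine le_inf ?_ ?_
  · calc (res x y ⊓ res y x) * (res y z ⊓ res z y) ≤ res x y * res y z := by
          gcongr <;> exact inf_le_left
      _ ≤ res x z := res_mul_res_le x y z
  · calc (res x y ⊓ res y x) * (res y z ⊓ res z y) ≤ res z y * res y x := by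
          rw [mul_comm]; gcongr <;> exact inf_le_right
      _ ≤ res z x := res_mul_res_le z y x

theorem mul_le_right_of_top_mul (htop : ∀ a : Q, ⊤ * a = a) (a b : Q) : a * b ≤ b :=
  calc a * b ≤ ⊤ * b := by gcongr; exact le_top
    _ = b := htop b

theorem res_self_of_top_mul (htop : ∀ a : Q, ⊤ * a = a) (x : Q) : res x x = ⊤ :=
  top_le_iff.mp (le_res_iff.mpr (by rw [mul_comm, htop]))

end

theorem qE_qset_general {Q : Type*} [CommSemigroup Q] [CompleteLattice Q] [IsQuantale Q]
    (hint : ∀ a : Q, ⊤ * a = a)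
    {x y z e a c : Q} (he : e * e = e) :
    a * e * (res x y ⊓ res y x) = e * a * (res y x ⊓ res x y) ∧
    (a * e * (res x y ⊓ res y x)) * (c * a * (res y z ⊓ res z y)) ≤
      c * e * (res x z ⊓ res z x) ∧
    (e * e * (res x x ⊓ res x x)) * (a * e * (res x y ⊓ res y x)) =
      a * e * (res x y ⊓ res y x) ∧
    e * e * (res x x ⊓ res x x) = e := by
  have hrefl : e * e * (res x x ⊓ res x x) = e := by
    rw [res_self_of_top_mul hint, inf_idem, he, mul_comm, hint]
  have hsymm : a * e * (res x y ⊓ res y x) = e * a * (res y x ⊓ res x y) := by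
    rw [mul_comm a e, inf_comm]
  have htrans : (a * e * (res x y ⊓ res y x)) * (c * a * (res y z ⊓ res z y)) ≤
      c * e * (res x z ⊓ res z x) :=
    calc (a * e * (res x y ⊓ res y x)) * (c * a * (res y z ⊓ res z y))
        = a * (a * (c * e * ((res x y ⊓ res y x) * (res y z ⊓ res z y)))) := by ac_rfl
      _ ≤ c * e * ((res x y ⊓ res y x) * (res y z ⊓ res z y)) :=
        (mul_le_right_of_top_mul hint _ _).trans (mul_le_right_of_top_mul hint _ _)
      _ ≤ c * e * (res x z ⊓ res z x) := by gcongr; exact res_inf_res_mul_le x y z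
  have hunit : e * (a * e * (res x y ⊓ res y x)) = a * e * (res x y ⊓ res y x) := by
    rw [← mul_assoc, mul_comm e (a * e), mul_assoc a e e, he]
  exact ⟨hsymm, htrans, by rw [hrefl, hunit], hrefl⟩

/-- In an integral commutative quantale, `δ((x,e),(y,a)) = a * e * ((x ⧵ y) ⊓ (y ⧵ x))`
is a Q-set structure on `Q × E(Q)`. -/
theorem qE_qset {Q : Type*} [CommSemigroup Q] [CompleteLattice Q] [IsQuantale Q]
    (hint : ∀ a : Q, ⊤ * a = a)
    {x y z e a c : Q} (he : e * e = e) (ha : a * a = a) (hc : c * c = c) :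
    a * e * (res x y ⊓ res y x) = e * a * (res y x ⊓ res x y) ∧
    (a * e * (res x y ⊓ res y x)) * (c * a * (res y z ⊓ res z y)) ≤
      c * e * (res x z ⊓ res z x) ∧
    (e * e * (res x x ⊓ res x x)) * (a * e * (res x y ⊓ res y x)) =
      a * e * (res x y ⊓ res y x) ∧
    e * e * (res x x ⊓ res x x) = e :=
  qE_qset_general hint he
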